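/- arXiv:2411.14038 — 6 statements merged into one kernel-verified Lean document; each statement's English description precedes it below -/
import Mathlib

section
/- Let T be a tree on a finite point set S ⊆ ℝ², D a finite set of nonzero pairwise non-parallel directions, and suppose T is D-monotone (for every pair of vertices there is d ∈ D making the unique tree path between them d-monotone, where no two points of S project equally on any d ∈ D). Let x, u, v ∈ S with x an interior vertex of the path from u to v. If there exists no d ∈ D separating u and v with respect to x — i.e., for every d ∈ D, ⟨u−x, d⟩ and ⟨v−x, d⟩ have the same (nonzero) sign — then the path from u to v in T is not D-monotone. In particular, if u and v lie in the same open wedge of the arrangement of the lines through x orthogonal to the directions in D, the path from u to v is not D-monotone. -/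
open RealInnerProductSpace

abbrev Pt := EuclideanSpace ℝ (Fin 2)

/-- A list of points is `d`-monotone if the projections onto `d` are strictly
increasing or strictly decreasing along the list. -/
def ListMonotone (d : Pt) (l : List Pt) : Prop :=
  (l.map (fun p => ⟪p, d⟫)).Chain' (· < ·) ∨ (l.map (fun p => ⟪p, d⟫)).Chain' (· > ·)

/-- A graph drawn on a finite point set `S` is `D`-monotone if for every pair of
vertices there is a direction `d ∈ D` such that the unique path between them is
`d`-monotone. -/
def IsDMonotoneTree (S : Finset Pt) (G : SimpleGraph {p : Pt // p ∈ S}) (D : Finset Pt) : Prop :=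
  ∀ (u v : {p : Pt // p ∈ S}) (w : G.Walk u v), w.IsPath →
    ∃ d ∈ D, ListMonotone d (w.support.map (fun q => (q : Pt)))

lemma head_lt_of_pairwise {L : List ℝ} {b a : ℝ}
    (h : (b :: L).Pairwise (· < ·)) (ha : a ∈ b :: L) (hne : a ≠ b) : b < a := by
  rcases List.mem_cons.1 ha with rfl | ha'
  · exact absurd rfl hne
  · exact (List.pairwise_cons.1 h).1 a ha'

lemma head_gt_of_pairwise {L : List ℝ} {b a : ℝ}
    (h : (b :: L).Pairwise (· > ·)) (ha : a ∈ b :: L) (hne : a ≠ b) : a < b := by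
  rcases List.mem_cons.1 ha with rfl | ha'
  · exact absurd rfl hne
  · exact (List.pairwise_cons.1 h).1 a ha'

theorem stmt_5 (S : Finset Pt) (G : SimpleGraph {p : Pt // p ∈ S})
    (hG : G.IsTree) (D : Finset Pt)
    (hD0 : ∀ d ∈ D, d ≠ (0 : Pt))
    (hDpar : ∀ d ∈ D, ∀ d' ∈ D, d ≠ d' → ∀ c : ℝ, d ≠ c • d')
    (hgen : ∀ d ∈ D, ∀ p ∈ S, ∀ q ∈ S, p ≠ q → ⟪p, d⟫ ≠ ⟪q, d⟫)
    (hmono : IsDMonotoneTree S G D)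
    (u v x : {p : Pt // p ∈ S})
    (w : G.Walk u v) (hw : w.IsPath)
    (hx : x ∈ w.support) (hxu : x ≠ u) (hxv : x ≠ v)
    (hsep : ∀ d ∈ D, 0 < ⟪(u : Pt) - x, d⟫ * ⟪(v : Pt) - x, d⟫) :
    ¬ ∃ d ∈ D, ListMonotone d (w.support.map (fun q => (q : Pt))) := by
  rintro ⟨d, hd, hmon⟩
  set f : {p : Pt // p ∈ S} → ℝ := fun q => ⟪(q : Pt), d⟫ with hf
  have hLmap : (w.support.map (fun q => (q : Pt))).map (fun p => (⟪p, d⟫ : ℝ)) =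
      w.support.map f := by simp [hf]
  -- projections of distinct vertices differ
  have hxune : f x ≠ f u := hgen d hd x.1 x.2 u.1 u.2 (fun h => hxu (Subtype.ext h))
  have hxvne : f x ≠ f v := hgen d hd x.1 x.2 v.1 v.2 (fun h => hxv (Subtype.ext h))
  have hxmem : f x ∈ w.support.map f := List.mem_map_of_mem (f := f) hx
  -- head of the mapped support is f u
  have hhead : w.support.map f = f u :: (w.support.tail.map f) := by
    rw [w.support_eq_cons]; rfl
  -- reverse of the mapped support has head f v
  have hlast : (w.support.map f).reverse = f v :: (w.reverse.support.tail.map f) := by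
    rw [← List.map_reverse, ← SimpleGraph.Walk.support_reverse,
      w.reverse.support_eq_cons]
    rfl
  have hprod := hsep d hd
  rw [inner_sub_left, inner_sub_left] at hprod
  have key : ∀ (R : ℝ → ℝ → Prop), (∀ a b c : ℝ, R a b → R b c → R a c) →
      (w.support.map f).Chain' R →
      R (f u) (f x) ∧ R (f x) (f v) := by
    intro R hR hchain
    have : IsTrans ℝ R := ⟨hR⟩
    have hpw : (w.support.map f).Pairwise R := List.isChain_iff_pairwise.1 hchain
    constructor
    · have := hhead ▸ hpw
      rcases List.mem_cons.1 (hhead ▸ hxmem) with h | h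
      · exact absurd h hxune
      · exact (List.pairwise_cons.1 this).1 _ h
    · have hpw' : (w.support.map f).reverse.Pairwise (flip R) :=
        List.pairwise_reverse.2 hpw
      have hxmem' : f x ∈ (w.support.map f).reverse := List.mem_reverse.2 hxmem
      have := hlast ▸ hpw'
      rcases List.mem_cons.1 (hlast ▸ hxmem') with h | h
      · exact absurd h hxvne
      · exact (List.pairwise_cons.1 this).1 _ h
  rcases hmon with hc | hc
  · rw [hLmap] at hc
    obtain ⟨h1, h2⟩ := key (· < ·) (fun a b c => lt_trans) hc
    nlinarith
  · rw [hLmap] at hc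
    obtain ⟨h1, h2⟩ := key (· > ·) (fun a b c h h' => lt_trans h' h) hc
    nlinarith
end

section
/- Let S ⊆ ℝ² be finite, D a set of k nonzero pairwise non-parallel directions with S in D-general position (no two points of S have the same projection on any d ∈ D), and T a D-monotone spanning tree of S. Then every vertex of T has degree at most 2k. -/
open RealInnerProductSpace

lemma inner_coords (z d : Pt) : ⟪z, d⟫ = z 0 * d 0 + z 1 * d 1 := by
  simp [PiLp.inner_apply, RCLike.inner_apply, Fin.sum_univ_two]; ring

lemma pt_ne (z : Pt) (h : z ≠ 0) : z 0 ≠ 0 ∨ z 1 ≠ 0 := by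
  by_contra hc
  push_neg at hc
  apply h
  ext i
  fin_cases i
  · simpa using hc.1
  · simpa using hc.2

lemma line_lemma (d z w : Pt) (hd : d ≠ 0) (hz : z ≠ 0) (hzd : ⟪z,d⟫ = (0:ℝ))
    (hwd : ⟪w,d⟫ = (0:ℝ)) : ∃ c : ℝ, w = c • z := by
  rw [inner_coords] at hzd hwd
  have hdet : z 0 * w 1 - z 1 * w 0 = 0 := by
    rcases pt_ne d hd with h | h
    · have h1 : (z 0 * w 1 - z 1 * w 0) * d 0 = 0 := by linear_combination w 1 * hzd - z 1 * hwd
      exact (mul_eq_zero.1 h1).resolve_right h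
    · have h1 : (z 0 * w 1 - z 1 * w 0) * d 1 = 0 := by linear_combination (- w 0) * hzd + z 0 * hwd
      exact (mul_eq_zero.1 h1).resolve_right h
  rcases pt_ne z hz with h | h
  · refine ⟨w 0 / z 0, ?_⟩
    ext i; fin_cases i <;> simp [PiLp.smul_apply] <;> field_simp <;> linarith [hdet]
  · refine ⟨w 1 / z 1, ?_⟩
    ext i; fin_cases i <;> simp [PiLp.smul_apply] <;> field_simp <;> linarith [hdet]

lemma mix (D' : Finset Pt) (hne : D'.Nonempty) (d x y : Pt) (hx : (0:ℝ) < ⟪x,d⟫) (hy : ⟪y,d⟫ < (0:ℝ))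
    (hx' : ∀ d' ∈ D', ⟪x,d'⟫ ≠ (0:ℝ)) (hy' : ∀ d' ∈ D', ⟪y,d'⟫ ≠ (0:ℝ))
    (hiff : ∀ d' ∈ D', ((0:ℝ) < ⟪x,d'⟫ ↔ (0:ℝ) < ⟪y,d'⟫)) :
    ∃ p : Pt, p ≠ 0 ∧ ⟪p,d⟫ = (0:ℝ) ∧
      ∀ d' ∈ D', (((0:ℝ) < ⟪p,d'⟫ ↔ (0:ℝ) < ⟪x,d'⟫) ∧ ⟪p,d'⟫ ≠ (0:ℝ)) := by
  set p : Pt := (-⟪y,d⟫) • x + ⟪x,d⟫ • y with hp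
  have key : ∀ d' ∈ D', (((0:ℝ) < ⟪p,d'⟫ ↔ (0:ℝ) < ⟪x,d'⟫) ∧ ⟪p,d'⟫ ≠ (0:ℝ)) := by
    intro d' hd'
    rw [hp, inner_add_left, real_inner_smul_left, real_inner_smul_left]
    rcases lt_or_gt_of_ne (hx' d' hd') with hA | hA
    · have hB : ⟪y,d'⟫ < 0 := by
        rcases lt_or_gt_of_ne (hy' d' hd') with h | h
        · exact h
        · exact absurd ((hiff d' hd').2 h) (by linarith)
      refine ⟨⟨fun h => by nlinarith, fun h => by linarith⟩, by nlinarith⟩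
    · have hB : (0:ℝ) < ⟪y,d'⟫ := (hiff d' hd').1 hA
      refine ⟨⟨fun _ => hA, fun _ => by nlinarith⟩, by nlinarith⟩
  refine ⟨p, ?_, ?_, key⟩
  · intro h0
    obtain ⟨d', hd'⟩ := hne
    exact (key d' hd').2 (by rw [h0, inner_zero_left])
  · rw [hp, inner_add_left, real_inner_smul_left, real_inner_smul_left]; ring

lemma signs_card (D : Finset Pt) : D.Nonempty → (∀ d ∈ D, d ≠ (0:Pt)) →
    ∀ X : Finset Pt, (∀ x ∈ X, ∀ d ∈ D, ⟪x,d⟫ ≠ (0:ℝ)) →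
    (∀ x ∈ X, ∀ y ∈ X, x ≠ y → ∃ d ∈ D, ¬((0:ℝ) < ⟪x,d⟫ ↔ (0:ℝ) < ⟪y,d⟫)) →
    X.card ≤ 2 * D.card := by
  classical
  induction D using Finset.induction_on with
  | empty => intro h; exact absurd rfl h.ne_empty
  | @insert d D' hd ih =>
    intro _ hD0 X hproj hdist
    rcases D'.eq_empty_or_nonempty with hD'e | hD'ne
    · subst hD'e
      simp only [Finset.card_insert_of_notMem hd, Finset.card_empty]
      have : X.card ≤ (Finset.univ : Finset Bool).card := by
        apply Finset.card_le_card_of_injOn (fun x => decide ((0:ℝ) < ⟪x,d⟫))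
        · intro x _; exact Finset.mem_univ _
        · intro x hx y hy hxy
          by_contra hne
          obtain ⟨d₀, hd₀, hs⟩ := hdist x hx y hy hne
          simp only [Finset.mem_insert, Finset.notMem_empty, or_false] at hd₀
          subst hd₀
          exact hs (by simpa [decide_eq_decide] using hxy)
      simpa using this
    · -- the merged set
      set M : Finset Pt := X.filter (fun x => (0:ℝ) < ⟪x,d⟫ ∧ ∃ y ∈ X, ⟪y,d⟫ < (0:ℝ) ∧
        ∀ d' ∈ D', ((0:ℝ) < ⟪x,d'⟫ ↔ (0:ℝ) < ⟪y,d'⟫)) with hM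
      have hMX : M ⊆ X := Finset.filter_subset _ _
      have hdmem : d ∈ insert d D' := Finset.mem_insert_self d D'
      have hD'sub : ∀ d' ∈ D', d' ∈ insert d D' := fun d' h => Finset.mem_insert_of_mem h
      -- X \ M is pairwise D'-distinguishable
      have hX' : (X \ M).card ≤ 2 * D'.card := by
        apply ih hD'ne (fun d' h => hD0 d' (hD'sub d' h))
        · intro x hx d' hd'
          exact hproj x (Finset.mem_sdiff.1 hx).1 d' (hD'sub d' hd')
        · intro x hx y hy hxy
          obtain ⟨hxX, hxM⟩ := Finset.mem_sdiff.1 hx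
          obtain ⟨hyX, hyM⟩ := Finset.mem_sdiff.1 hy
          obtain ⟨d₀, hd₀, hs⟩ := hdist x hxX y hyX hxy
          rcases Finset.mem_insert.1 hd₀ with rfl | hd₀'
          · -- signs wrt d differ; use non-membership in M
            have hxn := hproj x hxX d₀ hdmem
            have hyn := hproj y hyX d₀ hdmem
            -- wlog x is positive
            rcases lt_or_gt_of_ne hxn with hxneg | hxpos
            · -- x negative, so y positive
              have hypos : (0:ℝ) < ⟪y,d₀⟫ := by
                rcases lt_or_gt_of_ne hyn with h | h
                · exact absurd (iff_of_false (by linarith) (by linarith)) hs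
                · exact h
              rw [hM, Finset.mem_filter] at hyM
              push_neg at hyM
              obtain ⟨d', hd', hs'⟩ := hyM hyX hypos x hxX hxneg
              refine ⟨d', hd', fun h => ?_⟩
              rcases hs' with ⟨h1, h2⟩ | ⟨h1, h2⟩
              · exact absurd (h.2 h1) (not_lt.2 h2)
              · exact absurd (h.1 h2) (not_lt.2 h1)
            · have hyneg : ⟪y,d₀⟫ < 0 := by
                rcases lt_or_gt_of_ne hyn with h | h
                · exact h
                · exact absurd (iff_of_true hxpos h) hs
              rw [hM, Finset.mem_filter] at hxM
              push_neg at hxM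
              obtain ⟨d', hd', hs'⟩ := hxM hxX hxpos y hyX hyneg
              refine ⟨d', hd', fun h => ?_⟩
              rcases hs' with ⟨h1, h2⟩ | ⟨h1, h2⟩
              · exact absurd (h.1 h1) (not_lt.2 h2)
              · exact absurd (h.2 h2) (not_lt.2 h1)
          · exact ⟨d₀, hd₀', hs⟩
      have hM2 : M.card ≤ 2 := by
        by_contra hc
        push_neg at hc
        obtain ⟨x₁, x₂, x₃, hx₁, hx₂, hx₃, h12, h13, h23⟩ := Finset.two_lt_card_iff.1 hc
        have hdne : d ≠ 0 := hD0 d hdmem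
        have hpos : ∀ x ∈ M, (0:ℝ) < ⟪x,d⟫ := by
          intro x hx
          rw [hM, Finset.mem_filter] at hx
          exact hx.2.1
        have hp : ∀ x ∈ M, ∃ p : Pt, p ≠ 0 ∧ ⟪p,d⟫ = (0:ℝ) ∧
            ∀ d' ∈ D', (((0:ℝ) < ⟪p,d'⟫ ↔ (0:ℝ) < ⟪x,d'⟫) ∧ ⟪p,d'⟫ ≠ (0:ℝ)) := by
          intro x hx
          rw [hM, Finset.mem_filter] at hx
          obtain ⟨hxX, hxpos, y, hyX, hyneg, hiff⟩ := hx
          exact mix D' hD'ne d x y hxpos hyneg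
            (fun d' h => hproj x hxX d' (hD'sub d' h))
            (fun d' h => hproj y hyX d' (hD'sub d' h)) hiff
        have same : ∀ (x p : Pt), x ∈ M →
            (∀ d' ∈ D', (((0:ℝ) < ⟪p,d'⟫ ↔ (0:ℝ) < ⟪x,d'⟫) ∧ ⟪p,d'⟫ ≠ (0:ℝ))) →
            ∀ (y q : Pt), y ∈ M →
            (∀ d' ∈ D', (((0:ℝ) < ⟪q,d'⟫ ↔ (0:ℝ) < ⟪y,d'⟫) ∧ ⟪q,d'⟫ ≠ (0:ℝ))) →
            ∀ c : ℝ, 0 < c → q = c • p → x = y := by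
          intro x p hx hpx y q hy hqy c hc hq
          by_contra hxy
          obtain ⟨d₀, hd₀, hs⟩ := hdist x (hMX hx) y (hMX hy) hxy
          rcases Finset.mem_insert.1 hd₀ with rfl | hd₀'
          · exact hs (iff_of_true (hpos x hx) (hpos y hy))
          · have h1 := hpx d₀ hd₀'
            have h2 := hqy d₀ hd₀'
            have h3 : ((0:ℝ) < ⟪q,d₀⟫ ↔ (0:ℝ) < ⟪p,d₀⟫) := by
              rw [hq, real_inner_smul_left]
              constructor
              · intro h
                by_contra h'
                push_neg at h'
                nlinarith
              · intro h
                exact mul_pos hc h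
            exact hs ((h1.1.symm.trans (h3.symm.trans h2.1)))
        obtain ⟨p₁, hp₁0, hp₁d, hp₁⟩ := hp x₁ hx₁
        obtain ⟨p₂, hp₂0, hp₂d, hp₂⟩ := hp x₂ hx₂
        obtain ⟨p₃, hp₃0, hp₃d, hp₃⟩ := hp x₃ hx₃
        obtain ⟨c₂, hc₂⟩ := line_lemma d p₁ p₂ hdne hp₁0 hp₁d hp₂d
        obtain ⟨c₃, hc₃⟩ := line_lemma d p₁ p₃ hdne hp₁0 hp₁d hp₃d
        have hc₂0 : c₂ ≠ 0 := by
          rintro rfl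
          exact hp₂0 (by simpa using hc₂)
        have hc₃0 : c₃ ≠ 0 := by
          rintro rfl
          exact hp₃0 (by simpa using hc₃)
        rcases lt_or_gt_of_ne hc₂0 with hc₂neg | hc₂pos
        · rcases lt_or_gt_of_ne hc₃0 with hc₃neg | hc₃pos
          · -- p₃ = (c₃/c₂) • p₂
            have : p₃ = (c₃ / c₂) • p₂ := by
              rw [hc₃, hc₂, smul_smul]
              congr 1
              field_simp
            exact h23 (same x₂ p₂ hx₂ hp₂ x₃ p₃ hx₃ hp₃ (c₃ / c₂) (div_pos_iff.2 (Or.inr ⟨hc₃neg, hc₂neg⟩)) this)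
          · exact h13 (same x₁ p₁ hx₁ hp₁ x₃ p₃ hx₃ hp₃ c₃ hc₃pos hc₃)
        · exact h12 (same x₁ p₁ hx₁ hp₁ x₂ p₂ hx₂ hp₂ c₂ hc₂pos hc₂)
      calc X.card = (X \ M).card + M.card := (Finset.card_sdiff_add_card_eq_card hMX).symm
        _ ≤ 2 * D'.card + 2 := Nat.add_le_add hX' hM2
        _ = 2 * (insert d D').card := by rw [Finset.card_insert_of_notMem hd]; ring

theorem stmt_6 (S : Finset Pt) (G : SimpleGraph {p : Pt // p ∈ S})
    (hG : G.IsTree) (k : ℕ) (D : Finset Pt) (hcard : D.card = k)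
    (hD0 : ∀ d ∈ D, d ≠ (0 : Pt))
    (hDpar : ∀ d ∈ D, ∀ d' ∈ D, d ≠ d' → ∀ c : ℝ, d ≠ c • d')
    (hgen : ∀ d ∈ D, ∀ p ∈ S, ∀ q ∈ S, p ≠ q → ⟪p, d⟫ ≠ ⟪q, d⟫)
    (hmono : IsDMonotoneTree S G D) :
    ∀ v : {p : Pt // p ∈ S}, (G.neighborSet v).ncard ≤ 2 * k := by
  classical
  intro v
  set nbrs : Finset {p : Pt // p ∈ S} := Finset.univ.filter (G.Adj v) with hnbrs
  have hset : G.neighborSet v = ↑nbrs := by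
    ext u; simp [hnbrs, SimpleGraph.neighborSet]
  rw [hset, Set.ncard_coe_finset]
  rcases nbrs.eq_empty_or_nonempty with he | ⟨u₀, hu₀⟩
  · simp [he]
  · -- D nonempty
    have hadj₀ : G.Adj v u₀ := by simpa [hnbrs] using hu₀
    have hDne : D.Nonempty := by
      obtain ⟨d, hd, _⟩ := hmono v u₀ (SimpleGraph.Walk.cons hadj₀ SimpleGraph.Walk.nil)
        (by simp [SimpleGraph.Walk.isPath_def, hadj₀.ne])
      exact ⟨d, hd⟩
    set X : Finset Pt := Finset.image (fun u : {p : Pt // p ∈ S} => (u : Pt) - (v : Pt)) nbrs with hX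
    have hcardX : X.card = nbrs.card := by
      apply Finset.card_image_of_injOn
      intro a _ b _ hab
      exact Subtype.ext (by simpa [sub_left_inj] using hab)
    have hvne : ∀ u ∈ nbrs, (u : Pt) ≠ (v : Pt) := by
      intro u hu
      have hadj : G.Adj v u := by simpa [hnbrs] using hu
      exact fun h => hadj.ne' (Subtype.ext h)
    have hproj : ∀ x ∈ X, ∀ d ∈ D, ⟪x,d⟫ ≠ (0:ℝ) := by
      intro x hx d hd
      obtain ⟨u, hu, rfl⟩ := Finset.mem_image.1 hx
      rw [inner_sub_left, sub_ne_zero]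
      exact hgen d hd _ u.2 _ v.2 (hvne u hu)
    have hdist : ∀ x ∈ X, ∀ y ∈ X, x ≠ y →
        ∃ d ∈ D, ¬((0:ℝ) < ⟪x,d⟫ ↔ (0:ℝ) < ⟪y,d⟫) := by
      intro x hx y hy hxy
      obtain ⟨u₁, hu₁, rfl⟩ := Finset.mem_image.1 hx
      obtain ⟨u₂, hu₂, rfl⟩ := Finset.mem_image.1 hy
      have hne12 : u₁ ≠ u₂ := fun h => hxy (by rw [h])
      have h1 : G.Adj v u₁ := by simpa [hnbrs] using hu₁
      have h2 : G.Adj v u₂ := by simpa [hnbrs] using hu₂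
      have hw : (SimpleGraph.Walk.cons h1.symm (SimpleGraph.Walk.cons h2
          SimpleGraph.Walk.nil) : G.Walk u₁ u₂).IsPath := by
        simp [SimpleGraph.Walk.isPath_def, h1.ne', h2.ne, hne12]
      obtain ⟨d, hd, hmon⟩ := hmono u₁ u₂ _ hw
      refine ⟨d, hd, ?_⟩
      simp [ListMonotone, SimpleGraph.Walk.support_cons, List.Chain', List.isChain_cons_cons, inner_coords] at hmon
      simp only [inner_sub_left, inner_coords]
      rcases hmon with ⟨ha, hb⟩ | ⟨ha, hb⟩
      · intro h
        have h2' : (0:ℝ) < ((u₂:Pt) 0 * d 0 + (u₂:Pt) 1 * d 1) -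
            ((v:Pt) 0 * d 0 + (v:Pt) 1 * d 1) := by linarith
        have := h.2 h2'
        linarith
      · intro h
        have h1' : (0:ℝ) < ((u₁:Pt) 0 * d 0 + (u₁:Pt) 1 * d 1) -
            ((v:Pt) 0 * d 0 + (v:Pt) 1 * d 1) := by linarith
        have := h.1 h1'
        linarith
    calc nbrs.card = X.card := hcardX.symm
      _ ≤ 2 * D.card := signs_card D hDne hD0 X hproj hdist
      _ = 2 * k := by rw [hcard]
end

section
/- Let S ⊆ ℝ² be finite, D a set of k nonzero pairwise non-parallel directions with S in D-general position, and T a D-monotone spanning tree of S. Then T has at most 2k leaves. -/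
open RealInnerProductSpace

noncomputable def rot (d : Pt) : Pt := !₂[-(d 1), d 0]

lemma perp_lemma (d : Pt) (hd : d ≠ 0) (u : Pt) (h : ⟪u, d⟫ = 0) : ∃ c : ℝ, u = c • rot d := by
  have h' : u 0 * d 0 + u 1 * d 1 = 0 := by
    have h2 := h
    simp [PiLp.inner_apply, Fin.sum_univ_two] at h2
    linarith
  have hd' : d 0 ≠ 0 ∨ d 1 ≠ 0 := by
    by_contra hc
    push_neg at hc
    apply hd
    ext i
    fin_cases i <;> simp [hc.1, hc.2]
  rcases hd' with h0 | h1
  · refine ⟨u 1 / d 0, ?_⟩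
    ext i
    fin_cases i <;> simp [rot, PiLp.smul_apply] <;> field_simp <;> nlinarith [h']
  · refine ⟨-(u 0) / d 1, ?_⟩
    ext i
    fin_cases i <;> simp [rot, PiLp.smul_apply] <;> field_simp <;> nlinarith [h']

open Classical in
noncomputable def sgn (D : Finset Pt) (w : Pt) : Pt → Bool :=
  fun d => decide (d ∈ D ∧ 0 < ⟪w, d⟫)

lemma sgn_eq_of_pos_smul (D : Finset Pt) (u J : Pt) (c : ℝ) (hc : 0 < c) (hu : u = c • J) :
    sgn D u = sgn D J := by
  funext d
  simp only [sgn, decide_eq_decide, hu, real_inner_smul_left]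
  constructor
  · rintro ⟨h1, h2⟩
    refine ⟨h1, ?_⟩
    nlinarith
  · rintro ⟨h1, h2⟩; exact ⟨h1, mul_pos hc h2⟩

open Classical in
lemma sgn_count (D : Finset Pt) : ∀ (W : Finset Pt), D.Nonempty → (∀ d ∈ D, d ≠ 0) →
    (∀ w ∈ W, ∀ d ∈ D, ⟪w, d⟫ ≠ 0) → (W.image (sgn D)).card ≤ 2 * D.card := by
  classical
  induction D using Finset.induction_on with
  | empty => intro W hne _ _; exact absurd hne (by simp)
  | @insert d₀ D' hd₀ ih =>
    intro W _ hD0 hW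
    have hd₀D : d₀ ∈ insert d₀ D' := Finset.mem_insert_self _ _
    -- Step A: replace sgn (insert d₀ D') by the pair function τ
    set τ : Pt → (Pt → Bool) × Bool :=
      fun w => (sgn D' w, decide (0 < ⟪w, d₀⟫)) with hτ
    have hΦ : ∀ w : Pt, τ w = (Function.update (sgn (insert d₀ D') w) d₀ false,
        sgn (insert d₀ D') w d₀) := by
      intro w
      simp only [hτ, Prod.mk.injEq]
      constructor
      · funext d
        by_cases hd : d = d₀
        · subst hd
          simp [sgn, Function.update_self, hd₀]
        · simp [sgn, Function.update_of_ne hd, Finset.mem_insert, hd]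
      · simp [sgn, hd₀D]
    have hΦinj : Function.Injective
        (fun g : Pt → Bool => (Function.update g d₀ false, g d₀)) := by
      intro g g' hgg'
      simp only [Prod.mk.injEq] at hgg'
      funext d
      by_cases hd : d = d₀
      · subst hd; exact hgg'.2
      · have := congrFun hgg'.1 d
        rwa [Function.update_of_ne hd, Function.update_of_ne hd] at this
    have cardA : (W.image (sgn (insert d₀ D'))).card = (W.image τ).card := by
      have h1 : W.image τ = (W.image (sgn (insert d₀ D'))).image
          (fun g => (Function.update g d₀ false, g d₀)) := by
        rw [Finset.image_image]
        exact Finset.image_congr (fun w _ => hΦ w)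
      rw [h1]
      exact (Finset.card_image_of_injective _ hΦinj).symm
    rw [cardA]
    -- Step B
    set P := W.image τ with hP
    set I' := W.image (sgn D') with hI'
    have hfst : P.image Prod.fst = I' := by
      rw [hP, hI', Finset.image_image]; rfl
    set Split := I'.filter (fun s => (s, true) ∈ P ∧ (s, false) ∈ P) with hSplit
    have cardB : P.card ≤ I'.card + Split.card := by
      rw [Finset.card_eq_sum_card_image Prod.fst P, hfst]
      have h2 : Split.card = ∑ s ∈ I', if (s, true) ∈ P ∧ (s, false) ∈ P then 1 else 0 := by
        rw [hSplit, Finset.card_filter]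
      rw [h2, Finset.card_eq_sum_ones I', ← Finset.sum_add_distrib]
      apply Finset.sum_le_sum
      intro s _
      by_cases hs : (s, true) ∈ P ∧ (s, false) ∈ P
      · rw [if_pos hs]
        calc (P.filter (fun x => x.1 = s)).card
            ≤ ({(s, true), (s, false)} : Finset ((Pt → Bool) × Bool)).card := by
              apply Finset.card_le_card
              intro x hx
              simp only [Finset.mem_filter] at hx
              rcases Bool.eq_false_or_eq_true x.2 with h2 | h2 <;>
                simp [Finset.mem_insert, Finset.mem_singleton, Prod.ext_iff, hx.2, h2]
          _ ≤ 2 := (Finset.card_insert_le _ _).trans (by simp)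
      · rw [if_neg hs]
        apply Finset.card_le_one.mpr
        intro a ha b hb
        simp only [Finset.mem_filter] at ha hb
        have ha2 : a = (s, a.2) := Prod.ext ha.2 rfl
        have hb2 : b = (s, b.2) := Prod.ext hb.2 rfl
        by_contra hab
        have hne2 : a.2 ≠ b.2 := fun h => hab (by rw [ha2, hb2, h])
        have hA : (s, a.2) ∈ P := by rw [← ha2]; exact ha.1
        have hB : (s, b.2) ∈ P := by rw [← hb2]; exact hb.1
        rcases Bool.eq_false_or_eq_true a.2 with h2 | h2 <;>
          rcases Bool.eq_false_or_eq_true b.2 with h3 | h3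
        · exact hne2 (h2.trans h3.symm)
        · rw [h2] at hA; rw [h3] at hB; exact hs ⟨hA, hB⟩
        · rw [h2] at hA; rw [h3] at hB; exact hs ⟨hB, hA⟩
        · exact hne2 (h2.trans h3.symm)
    rcases D'.eq_empty_or_nonempty with hD'e | hD'ne
    · -- D' empty: I'.card ≤ 1 and Split ⊆ I'
      have hI1 : I'.card ≤ 1 := by
        apply Finset.card_le_one.mpr
        intro a ha b hb
        rw [hI', Finset.mem_image] at ha hb
        obtain ⟨x, _, hx⟩ := ha
        obtain ⟨y, _, hy⟩ := hb
        rw [← hx, ← hy]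
        funext d
        simp [sgn, hD'e]
      have hS1 : Split.card ≤ 1 :=
        le_trans (Finset.card_le_card (Finset.filter_subset _ _)) hI1
      calc P.card ≤ I'.card + Split.card := cardB
        _ ≤ 1 + 1 := Nat.add_le_add hI1 hS1
        _ ≤ 2 * (insert d₀ D').card := by
            rw [Finset.card_insert_of_notMem hd₀, hD'e]; simp
    · -- D' nonempty
      -- Step C: bound Split.card
      have hsplit_mem : ∀ s ∈ Split, s = sgn D' (rot d₀) ∨ s = sgn D' (-(rot d₀)) := by
        intro s hs
        rw [hSplit, Finset.mem_filter] at hs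
        have hst := hs.2.1
        have hsf := hs.2.2
        rw [hP, Finset.mem_image] at hst hsf
        obtain ⟨wp, hwpW, hwp⟩ := hst
        obtain ⟨wm, hwmW, hwm⟩ := hsf
        simp only [hτ, Prod.mk.injEq] at hwp hwm
        have hwps : sgn D' wp = s := hwp.1
        have hwms : sgn D' wm = s := hwm.1
        have hA : 0 < ⟪wp, d₀⟫ := by
          have := hwp.2; simpa using this
        have hB : ⟪wm, d₀⟫ < 0 := by
          have h1 : ¬ (0 < ⟪wm, d₀⟫) := by
            have := hwm.2; simpa using this
          have h2 : ⟪wm, d₀⟫ ≠ 0 := hW wm hwmW d₀ hd₀D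
          exact lt_of_le_of_ne (not_lt.mp h1) h2
        set u : Pt := ⟪wp, d₀⟫ • wm - ⟪wm, d₀⟫ • wp with hu
        have hud₀ : ⟪u, d₀⟫ = 0 := by
          rw [hu, inner_sub_left, real_inner_smul_left, real_inner_smul_left]
          ring
        have hinner : ∀ d : Pt, ⟪u, d⟫ = ⟪wp, d₀⟫ * ⟪wm, d⟫ - ⟪wm, d₀⟫ * ⟪wp, d⟫ := by
          intro d
          rw [hu, inner_sub_left, real_inner_smul_left, real_inner_smul_left]
        have hkey : ∀ d ∈ D', (s d = true → 0 < ⟪u, d⟫) ∧ (s d = false → ⟪u, d⟫ < 0) := by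
          intro d hd
          have hxne : ⟪wp, d⟫ ≠ 0 := hW wp hwpW d (Finset.mem_insert_of_mem hd)
          have hyne : ⟪wm, d⟫ ≠ 0 := hW wm hwmW d (Finset.mem_insert_of_mem hd)
          have hsx : s d = true ↔ 0 < ⟪wp, d⟫ := by
            rw [← hwps]; simp [sgn, hd]
          have hsy : s d = true ↔ 0 < ⟪wm, d⟫ := by
            rw [← hwms]; simp [sgn, hd]
          constructor
          · intro hst'
            have hx := hsx.mp hst'
            have hy := hsy.mp hst'
            rw [hinner]
            nlinarith
          · intro hsf'
            have hx : ⟪wp, d⟫ < 0 :=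
              lt_of_le_of_ne (not_lt.mp (fun h => by simp [hsx.mpr h] at hsf')) hxne
            have hy : ⟪wm, d⟫ < 0 :=
              lt_of_le_of_ne (not_lt.mp (fun h => by simp [hsy.mpr h] at hsf')) hyne
            rw [hinner]
            nlinarith
        have hDne' : D'.Nonempty := hD'ne
        obtain ⟨d₁, hd₁⟩ := hDne'
        have hune : u ≠ 0 := by
          intro h0
          have h1 := hkey d₁ hd₁
          rcases Bool.eq_false_or_eq_true (s d₁) with h | h
          · have := h1.1 h; rw [h0, inner_zero_left] at this; linarith
          · have := h1.2 h; rw [h0, inner_zero_left] at this; linarith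
        obtain ⟨c, hc⟩ := perp_lemma d₀ (hD0 d₀ hd₀D) u hud₀
        have hcne : c ≠ 0 := by
          intro h0; rw [h0, zero_smul] at hc; exact hune hc
        have hsu : s = sgn D' u := by
          funext d
          by_cases hd : d ∈ D'
          · rcases Bool.eq_false_or_eq_true (s d) with h | h
            · rw [h]
              symm
              simp only [sgn, decide_eq_true_eq]
              exact ⟨hd, (hkey d hd).1 h⟩
            · rw [h]
              symm
              simp only [sgn, decide_eq_false_iff_not, not_and, not_lt]
              intro _
              exact le_of_lt ((hkey d hd).2 h)
          · have h1 : s d = false := by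
              rw [← hwps]; simp [sgn, hd]
            have h2 : sgn D' u d = false := by simp [sgn, hd]
            rw [h1, h2]
        rcases lt_or_gt_of_ne hcne with hneg | hpos
        · right
          rw [hsu]
          exact sgn_eq_of_pos_smul D' u (-(rot d₀)) (-c) (by linarith)
            (by rw [hc]; simp)
        · left
          rw [hsu]
          exact sgn_eq_of_pos_smul D' u (rot d₀) c hpos hc
      have hIH : I'.card ≤ 2 * D'.card :=
        ih W hD'ne (fun d hd => hD0 d (Finset.mem_insert_of_mem hd))
          (fun w hw d hd => hW w hw d (Finset.mem_insert_of_mem hd))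
      have hS2 : Split.card ≤ 2 := by
        have hsub : Split ⊆ {sgn D' (rot d₀), sgn D' (-(rot d₀))} := by
          intro s hs
          rcases hsplit_mem s hs with h | h <;> simp [h]
        exact le_trans (Finset.card_le_card hsub)
          ((Finset.card_insert_le _ _).trans (by simp))
      calc P.card ≤ I'.card + Split.card := cardB
        _ ≤ 2 * D'.card + 2 := Nat.add_le_add hIH hS2
        _ = 2 * (insert d₀ D').card := by
            rw [Finset.card_insert_of_notMem hd₀]; ring

lemma first_step {V : Type*} {G : SimpleGraph V} {v x : V} (q : G.Walk v x)
    (hne : v ≠ x) (f : V → ℝ) (R : ℝ → ℝ → Prop)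
    (hc : (q.support.map f).Chain' R) :
    ∃ u, G.Adj v u ∧ R (f v) (f u) := by
  cases q with
  | nil => exact absurd rfl hne
  | cons h q' =>
    rename_i u
    refine ⟨u, h, ?_⟩
    rw [SimpleGraph.Walk.support_cons, q'.support_eq_cons] at hc
    simp only [List.Chain', List.map_cons, List.isChain_cons_cons] at hc
    exact hc.1

theorem stmt_7 (S : Finset Pt) (G : SimpleGraph {p : Pt // p ∈ S})
    (hG : G.IsTree) (k : ℕ) (D : Finset Pt) (hcard : D.card = k)
    (hD0 : ∀ d ∈ D, d ≠ (0 : Pt))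
    (hDpar : ∀ d ∈ D, ∀ d' ∈ D, d ≠ d' → ∀ c : ℝ, d ≠ c • d')
    (hgen : ∀ d ∈ D, ∀ p ∈ S, ∀ q ∈ S, p ≠ q → ⟪p, d⟫ ≠ ⟪q, d⟫)
    (hmono : IsDMonotoneTree S G D) :
    {v : {p : Pt // p ∈ S} | (G.neighborSet v).ncard = 1}.ncard ≤ 2 * k := by
  classical
  subst hcard
  rcases D.eq_empty_or_nonempty with hDe | hDne
  · have hempty : {v : {p : Pt // p ∈ S} | (G.neighborSet v).ncard = 1} = ∅ := by
      ext v
      simp only [Set.mem_setOf_eq, Set.mem_empty_iff_false, iff_false]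
      intro _
      obtain ⟨d, hd, _⟩ := hmono v v SimpleGraph.Walk.nil (by simp)
      rw [hDe] at hd
      exact absurd hd (Finset.notMem_empty d)
    rw [hempty, Set.ncard_empty]
    exact Nat.zero_le _
  · set L := {v : {p : Pt // p ∈ S} | (G.neighborSet v).ncard = 1} with hLdef
    have hnbex : ∀ v ∈ L, ∃ u, G.neighborSet v = {u} := fun v hv => Set.ncard_eq_one.mp hv
    set nb : {p : Pt // p ∈ S} → {p : Pt // p ∈ S} :=
      fun v => if h : ∃ u, G.neighborSet v = {u} then h.choose else v with hnb
    have hnbs : ∀ v ∈ L, G.neighborSet v = {nb v} := by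
      intro v hv
      rw [hnb]
      simp only
      rw [dif_pos (hnbex v hv)]
      exact (hnbex v hv).choose_spec
    have hadj : ∀ v ∈ L, G.Adj v (nb v) := by
      intro v hv
      have : nb v ∈ G.neighborSet v := by
        rw [hnbs v hv]; exact Set.mem_singleton _
      exact this
    set ev : {p : Pt // p ∈ S} → Pt := fun v => (nb v : Pt) - (v : Pt) with hev
    have hevinner : ∀ (v : {p : Pt // p ∈ S}) (d : Pt),
        ⟪ev v, d⟫ = ⟪(nb v : Pt), d⟫ - ⟪(v : Pt), d⟫ := by
      intro v d; rw [hev]; exact inner_sub_left _ _ _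
    have hfin : L.Finite := Set.toFinite L
    -- sign contradiction helper
    have hcontra : ∀ d ∈ D, ∀ (a b : Pt), 0 < ⟪a, d⟫ → ⟪b, d⟫ < 0 → sgn D a ≠ sgn D b := by
      intro d hd a b ha hb hab
      have := congrFun hab d
      simp only [sgn, decide_eq_decide] at this
      have h1 : d ∈ D ∧ 0 < ⟪a, d⟫ := ⟨hd, ha⟩
      have h2 := this.mp h1
      linarith [h2.2]
    -- injectivity
    have hFinj : Set.InjOn (fun v => sgn D (ev v)) L := by
      intro v hv w hw hFvw
      by_contra hne
      obtain ⟨p, hp⟩ : ∃ p : G.Walk v w, p.IsPath := by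
        obtain ⟨q⟩ := hG.isConnected.preconnected v w
        exact ⟨q.toPath.1, q.toPath.2⟩
      obtain ⟨d, hd, hm⟩ := hmono v w p hp
      set f : {p : Pt // p ∈ S} → ℝ := fun y => ⟪(y : Pt), d⟫ with hf
      have hmm : (p.support.map f).Chain' (· < ·) ∨ (p.support.map f).Chain' (· > ·) := by
        have h0 : (p.support.map (fun q => (q : Pt))) = p.support.unattach := by simp
        have h1 : p.support.unattach.map (fun p => ⟪p, d⟫) = p.support.map f := by
          rw [List.unattach, List.map_map]; rfl
        unfold ListMonotone at hm
        rw [h0, h1] at hm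
        exact hm
      have hrev : ∀ (R : ℝ → ℝ → Prop), (p.support.map f).Chain' R →
          (p.reverse.support.map f).Chain' (flip R) := by
        intro R hR
        rw [SimpleGraph.Walk.support_reverse, List.map_reverse]
        exact List.isChain_reverse.mpr (by simpa [flip, List.Chain'] using hR)
      have hstep : ∀ (R : ℝ → ℝ → Prop), (p.support.map f).Chain' R →
          R (f v) (f (nb v)) ∧ (flip R) (f w) (f (nb w)) := by
        intro R hR
        obtain ⟨u, hu, hru⟩ := first_step p hne f R hR
        obtain ⟨u', hu', hru'⟩ := first_step p.reverse (Ne.symm hne) f (flip R) (hrev R hR)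
        have huv : u = nb v := by
          have : u ∈ G.neighborSet v := hu
          rw [hnbs v hv] at this
          exact this
        have huw : u' = nb w := by
          have : u' ∈ G.neighborSet w := hu'
          rw [hnbs w hw] at this
          exact this
        exact ⟨huv ▸ hru, huw ▸ hru'⟩
      rcases hmm with hm | hm
      · obtain ⟨h1, h2⟩ := hstep (· < ·) hm
        have ha : 0 < ⟪ev v, d⟫ := by rw [hevinner]; simp only [hf] at h1; linarith
        have hb : ⟪ev w, d⟫ < 0 := by
          rw [hevinner]; simp only [flip, hf] at h2; linarith
        exact hcontra d hd (ev v) (ev w) ha hb hFvw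
      · obtain ⟨h1, h2⟩ := hstep (· > ·) hm
        have ha : 0 < ⟪ev w, d⟫ := by
          rw [hevinner]; simp only [flip, hf] at h2; linarith
        have hb : ⟪ev v, d⟫ < 0 := by rw [hevinner]; simp only [hf] at h1; linarith
        exact hcontra d hd (ev w) (ev v) ha hb hFvw.symm
    -- counting
    have hWne : ∀ x ∈ hfin.toFinset.image ev, ∀ d ∈ D, ⟪x, d⟫ ≠ 0 := by
      intro x hx d hd
      rw [Finset.mem_image] at hx
      obtain ⟨v, hv, hvx⟩ := hx
      rw [Set.Finite.mem_toFinset] at hv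
      have hne : (nb v : Pt) ≠ (v : Pt) := by
        intro h
        exact (hadj v hv).ne' (Subtype.coe_injective h)
      rw [← hvx, hevinner]
      exact sub_ne_zero_of_ne (hgen d hd (nb v) (nb v).2 v v.2 hne)
    calc L.ncard = hfin.toFinset.card := Set.ncard_eq_toFinset_card L hfin
      _ = (hfin.toFinset.image (fun v => sgn D (ev v))).card := by
          rw [Finset.card_image_of_injOn]
          intro a ha b hb
          rw [Set.Finite.coe_toFinset] at ha hb
          exact hFinj ha hb
      _ = ((hfin.toFinset.image ev).image (sgn D)).card := by
          rw [Finset.image_image]; rfl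
      _ ≤ 2 * D.card := sgn_count D _ hDne hD0 hWne
end

section
/- Every vertex of the Euclidean minimum spanning tree of a finite point set in ℝ² has degree at most 6. More precisely, if T is a spanning tree of S ⊆ ℝ² minimizing total edge length and u ∈ S, then u has at most 6 neighbors in T; this follows because any two edges uv, uw of T incident to u subtend an angle of at least π/3 at u. -/
open RealInnerProductSpace Real

/-- The Euclidean length of an (undirected) edge of a geometric graph. -/
noncomputable def edgeLength {S : Finset Pt} (e : Sym2 {p : Pt // p ∈ S}) : ℝ :=
  Sym2.lift ⟨fun (a b : {p : Pt // p ∈ S}) => dist (a : Pt) (b : Pt),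
    fun a b => dist_comm (a : Pt) (b : Pt)⟩ e

/-- Total Euclidean edge length of a geometric graph on `S`. -/
noncomputable def totalLength {S : Finset Pt} (G : SimpleGraph {p : Pt // p ∈ S}) : ℝ :=
  ∑ᶠ e ∈ G.edgeSet, edgeLength e

open SimpleGraph in
/-- Decomposition of reachability in a graph augmented by one edge. -/
lemma reach_sup_edge {V : Type*} {H : SimpleGraph V} {p q x y : V}
    (h : (H ⊔ SimpleGraph.fromEdgeSet {s(p, q)}).Reachable x y) :
    H.Reachable x y ∨ (H.Reachable x p ∧ H.Reachable q y) ∨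
      (H.Reachable x q ∧ H.Reachable p y) := by
  obtain ⟨w⟩ := h
  induction w with
  | nil => exact Or.inl (Reachable.refl _)
  | @cons a b c hab w ih =>
    rcases (sup_adj _ _ _ _).1 hab with hH | hW
    · rcases ih with h1 | ⟨h1, h2⟩ | ⟨h1, h2⟩
      · exact Or.inl (hH.reachable.trans h1)
      · exact Or.inr (Or.inl ⟨hH.reachable.trans h1, h2⟩)
      · exact Or.inr (Or.inr ⟨hH.reachable.trans h1, h2⟩)
    · rw [fromEdgeSet_adj, Set.mem_singleton_iff, Sym2.eq_iff] at hW
      rcases hW.1 with ⟨hap, hbq⟩ | ⟨haq, hbp⟩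
      · subst hap; subst hbq
        rcases ih with h1 | ⟨h1, h2⟩ | ⟨h1, h2⟩
        · exact Or.inr (Or.inl ⟨Reachable.refl _, h1⟩)
        · exact Or.inr (Or.inl ⟨Reachable.refl _, h2⟩)
        · exact Or.inl h2
      · subst haq; subst hbp
        rcases ih with h1 | ⟨h1, h2⟩ | ⟨h1, h2⟩
        · exact Or.inr (Or.inr ⟨Reachable.refl _, h1⟩)
        · exact Or.inl h2
        · exact Or.inr (Or.inr ⟨Reachable.refl _, h2⟩)

open SimpleGraph in
/-- The exchange argument: if `uv`, `uw` are tree edges and `vw` is strictly shorter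
than `uv`, then the tree was not minimal. -/
lemma exchange {S : Finset Pt} {T : SimpleGraph {p : Pt // p ∈ S}}
    (hT : T.IsTree)
    (hmin : ∀ T' : SimpleGraph {p : Pt // p ∈ S}, T'.IsTree → totalLength T ≤ totalLength T')
    {u v w : {p : Pt // p ∈ S}} (hv : T.Adj u v) (hw : T.Adj u w) (hvw : v ≠ w)
    (hlt : dist (v : Pt) (w : Pt) < dist (u : Pt) (v : Pt)) : False := by
  classical
  have hbr : ∀ ⦃a b : {p : Pt // p ∈ S}⦄, T.Adj a b →
      ¬(T \ fromEdgeSet {s(a, b)}).Reachable a b := by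
    intro a b hab
    exact (isBridge_iff.1 (isAcyclic_iff_forall_adj_isBridge.1 hT.IsAcyclic hab))
  have huv : u ≠ v := hv.ne
  have huw : u ≠ w := hw.ne
  -- the would-be edge vw is not in T
  have heuw : s(u, w) ≠ s(u, v) := by
    rw [Ne, Sym2.eq_iff]
    rintro (⟨-, h⟩ | ⟨h, -⟩)
    · exact hvw h.symm
    · exact huv h
  have hewv : s(w, v) ≠ s(u, v) := by
    rw [Ne, Sym2.eq_iff]
    rintro (⟨h, -⟩ | ⟨h, -⟩)
    · exact huw h.symm
    · exact hvw h.symm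
  set D : SimpleGraph {p : Pt // p ∈ S} := T \ fromEdgeSet {s(u, v)} with hD
  have hDadj : ∀ {a b}, T.Adj a b → s(a, b) ≠ s(u, v) → D.Adj a b := by
    intro a b h1 h2
    rw [hD, sdiff_adj]
    exact ⟨h1, by simp [fromEdgeSet_adj, h2]⟩
  have hDuw : D.Adj u w := hDadj hw heuw
  have hnvw : ¬ T.Adj v w := by
    intro hadj
    apply hbr hv
    have h2 : (T \ fromEdgeSet {s(u, v)}).Adj w v := hDadj hadj.symm hewv
    exact (hDuw.reachable.trans h2.reachable)
  set T' : SimpleGraph {p : Pt // p ∈ S} := D ⊔ fromEdgeSet {s(v, w)} with hT'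
  have hT'vw : T'.Adj v w := by
    rw [hT', sup_adj]; right; rw [fromEdgeSet_adj]; exact ⟨rfl, hvw⟩
  have hT'uw : T'.Adj u w := by rw [hT', sup_adj]; left; exact hDuw
  -- connectivity
  have hreach : ∀ x y, T.Reachable x y → T'.Reachable x y := by
    intro x y h
    obtain ⟨p⟩ := h
    induction p with
    | nil => exact Reachable.refl _
    | @cons a b c hab p ih =>
      refine Reachable.trans ?_ ih
      by_cases he : s(a, b) = s(u, v)
      · rw [Sym2.eq_iff] at he
        rcases he with ⟨ha, hb⟩ | ⟨ha, hb⟩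
        · subst ha; subst hb
          exact hT'uw.reachable.trans hT'vw.symm.reachable
        · subst ha; subst hb
          exact hT'vw.reachable.trans hT'uw.symm.reachable
      · exact Adj.reachable (by rw [hT', sup_adj]; exact Or.inl (hDadj hab he))
  have hconn : T'.Connected := by
    rw [connected_iff]
    refine ⟨fun x y => hreach x y (hT.isConnected.preconnected x y), hT.isConnected.nonempty⟩
  -- acyclicity
  have hacyc : T'.IsAcyclic := by
    rw [isAcyclic_iff_forall_adj_isBridge]
    intro a b hab
    rw [isBridge_iff]
    refine fun hr => ?_
    rcases (sup_adj _ _ _ _).1 hab with hDab | hWab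
    · -- an original edge of T (other than uv)
      have habT : T.Adj a b := (sdiff_adj _ _ _ _).1 hDab |>.1
      have habne : s(a, b) ≠ s(u, v) := by
        have := (sdiff_adj _ _ _ _).1 hDab |>.2
        simpa [fromEdgeSet_adj, habT.ne] using this
      -- monotonicity into (D \ e) ⊔ {vw}
      set H : SimpleGraph {p : Pt // p ∈ S} := D \ fromEdgeSet {s(a, b)} with hH
      have hmono : T' \ fromEdgeSet {s(a, b)} ≤ H ⊔ fromEdgeSet {s(v, w)} := by
        intro x y hxy
        rw [sdiff_adj, hT', sup_adj] at hxy
        rcases hxy with ⟨h1 | h1, h2⟩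
        · exact Or.inl ((sdiff_adj _ _ _ _).2 ⟨h1, h2⟩)
        · exact Or.inr h1
      have hHle1 : H ≤ T \ fromEdgeSet {s(a, b)} := by
        intro x y hxy
        rw [hH, sdiff_adj, hD, sdiff_adj] at hxy
        exact (sdiff_adj _ _ _ _).2 ⟨hxy.1.1, hxy.2⟩
      have hHle2 : H ≤ T \ fromEdgeSet {s(u, v)} := by
        intro x y hxy
        rw [hH, sdiff_adj] at hxy
        exact hxy.1
      have hr' := reach_sup_edge ((hr.mono hmono))
      by_cases heuw' : s(a, b) = s(u, w)
      · -- the removed edge is uw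
        have hHle3 : H ≤ T \ fromEdgeSet {s(u, w)} := by
          intro x y hxy
          rw [hH, sdiff_adj, hD, sdiff_adj] at hxy
          rw [sdiff_adj]
          refine ⟨hxy.1.1, ?_⟩
          rw [← heuw']
          exact hxy.2
        rw [Sym2.eq_iff] at heuw'
        rcases heuw' with ⟨ha, hb⟩ | ⟨ha, hb⟩
        · subst ha; subst hb
          rcases hr' with h1 | ⟨h1, h2⟩ | ⟨h1, h2⟩
          · exact hbr hw (h1.mono hHle3)
          · exact hbr hv (h1.mono hHle2)
          · exact hbr hw (h1.mono hHle3)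
        · subst ha; subst hb
          rcases hr' with h1 | ⟨h1, h2⟩ | ⟨h1, h2⟩
          · exact hbr hw ((h1.mono hHle3)).symm
          · exact hbr hw ((h2.mono hHle3)).symm
          · exact hbr hv ((h2.mono hHle2)).symm
      · -- the removed edge is not uw (and not uv): v ~ u ~ w survives in T \ e
        have hvu : (T \ fromEdgeSet {s(a, b)}).Adj v u := by
          rw [sdiff_adj]
          refine ⟨hv.symm, ?_⟩
          simp only [fromEdgeSet_adj, Set.mem_singleton_iff, not_and]
          intro h
          exact absurd (h.symm.trans (Sym2.eq_swap)) habne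
        have huw' : (T \ fromEdgeSet {s(a, b)}).Adj u w := by
          rw [sdiff_adj]
          refine ⟨hw, ?_⟩
          simp only [fromEdgeSet_adj, Set.mem_singleton_iff, not_and]
          intro h
          exact absurd h.symm heuw'
        have hvwreach : (T \ fromEdgeSet {s(a, b)}).Reachable v w :=
          hvu.reachable.trans huw'.reachable
        rcases hr' with h1 | ⟨h1, h2⟩ | ⟨h1, h2⟩
        · exact hbr habT (h1.mono hHle1)
        · exact hbr habT (((h1.mono hHle1).trans hvwreach).trans (h2.mono hHle1))
        · exact hbr habT (((h1.mono hHle1).trans hvwreach.symm).trans (h2.mono hHle1))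
    · -- the new edge vw
      rw [fromEdgeSet_adj, Set.mem_singleton_iff, Sym2.eq_iff] at hWab
      have hmono : T' \ fromEdgeSet {s(a, b)} ≤ D := by
        intro x y hxy
        rw [sdiff_adj, hT', sup_adj] at hxy
        rcases hxy with ⟨h1 | h1, h2⟩
        · exact h1
        · exfalso; apply h2
          rw [fromEdgeSet_adj] at h1 ⊢
          rcases hWab.1 with ⟨ha, hb⟩ | ⟨ha, hb⟩ <;> subst ha <;> subst hb <;>
            simp_all [Sym2.eq_swap]
      have hDr : D.Reachable v w := by
        rcases hWab.1 with ⟨ha, hb⟩ | ⟨ha, hb⟩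
        · subst ha; subst hb; exact hr.mono hmono
        · subst ha; subst hb; exact (hr.mono hmono).symm
      exact hbr hv ((hDr.trans hDuw.symm.reachable)).symm
  have hT'tree : T'.IsTree := ⟨hconn, hacyc⟩
  -- length computation
  have hlen := hmin T' hT'tree
  have hd1 : ¬ (s(u, v) : Sym2 {p : Pt // p ∈ S}).IsDiag := by simp [huv]
  have hd2 : ¬ (s(v, w) : Sym2 {p : Pt // p ∈ S}).IsDiag := by simp [hvw]
  have hedge : T'.edgeSet = (T.edgeSet \ {s(u, v)}) ∪ {s(v, w)} := by
    rw [hT', edgeSet_sup, hD, edgeSet_sdiff, edgeSet_fromEdgeSet, edgeSet_fromEdgeSet]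
    ext e
    simp only [Set.mem_union, Set.mem_diff, Set.mem_singleton_iff, Set.mem_setOf_eq]
    constructor
    · rintro (⟨he, hne⟩ | ⟨he, hnd⟩)
      · exact Or.inl ⟨he, fun h => hne ⟨h, h ▸ hd1⟩⟩
      · exact Or.inr he
    · rintro (⟨he, hne⟩ | rfl)
      · exact Or.inl ⟨he, fun hm => hne hm.1⟩
      · exact Or.inr ⟨rfl, hd2⟩
  have hfinT : (T.edgeSet).Finite := Set.toFinite _
  have hfinT' : (T'.edgeSet).Finite := Set.toFinite _
  have htotT : totalLength T = ∑ e ∈ hfinT.toFinset, edgeLength e :=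
    finsum_mem_eq_finite_toFinset_sum _ hfinT
  have htotT' : totalLength T' = ∑ e ∈ hfinT'.toFinset, edgeLength e :=
    finsum_mem_eq_finite_toFinset_sum _ hfinT'
  have hmemuv : s(u, v) ∈ hfinT.toFinset := by
    rw [Set.Finite.mem_toFinset, SimpleGraph.mem_edgeSet]; exact hv
  have hnmemvw : s(v, w) ∉ hfinT.toFinset := by
    rw [Set.Finite.mem_toFinset, SimpleGraph.mem_edgeSet]; exact hnvw
  have hsetT' : hfinT'.toFinset = insert s(v, w) (hfinT.toFinset.erase s(u, v)) := by
    ext e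
    simp only [Set.Finite.mem_toFinset, hedge, Set.mem_union, Set.mem_diff,
      Set.mem_singleton_iff, Finset.mem_insert, Finset.mem_erase, Set.Finite.mem_toFinset]
    tauto
  have hsum : totalLength T' = edgeLength s(v, w) +
      (totalLength T - edgeLength s(u, v)) := by
    rw [htotT', hsetT',
      Finset.sum_insert (fun h => hnmemvw (Finset.mem_of_mem_erase h)),
      Finset.sum_erase_eq_sub hmemuv, htotT]
  have h1 : edgeLength s(v, w) = dist (v : Pt) (w : Pt) := rfl
  have h2 : edgeLength s(u, v) = dist (u : Pt) (v : Pt) := rfl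
  rw [hsum, h1, h2] at hlen
  linarith

open InnerProductGeometry in
/-- If the angle at the apex is `< π/3` and `uw ≤ uv` then `vw < uv`. -/
lemma dist_lt_of_angle_lt {u v w : Pt} (hv : v ≠ u) (hw : w ≠ u)
    (hle : dist u w ≤ dist u v)
    (hang : angle (v - u) (w - u) < π / 3) :
    dist v w < dist u v := by
  set x : Pt := v - u with hx
  set y : Pt := w - u with hy
  have hxd : dist u v = ‖x‖ := by rw [hx, dist_comm, dist_eq_norm]
  have hyd : dist u w = ‖y‖ := by rw [hy, dist_comm, dist_eq_norm]
  have hxy : x - y = v - w := by rw [hx, hy]; abel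
  have hvw : dist v w = ‖x - y‖ := by rw [hxy, dist_eq_norm]
  have hx0 : x ≠ 0 := sub_ne_zero.2 hv
  have hy0 : y ≠ 0 := sub_ne_zero.2 hw
  have hxpos : 0 < ‖x‖ := norm_pos_iff.2 hx0
  have hypos : 0 < ‖y‖ := norm_pos_iff.2 hy0
  have hcos : Real.cos (π / 3) < Real.cos (angle x y) := by
    apply Real.cos_lt_cos_of_nonneg_of_le_pi (angle_nonneg x y) (by linarith [Real.pi_pos]) hang
  rw [Real.cos_pi_div_three] at hcos
  have hlaw := norm_sub_sq_eq_norm_sq_add_norm_sq_sub_two_mul_norm_mul_norm_mul_cos_angle x y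
  have hyx : ‖y‖ ≤ ‖x‖ := by rwa [hxd, hyd] at hle
  have h5 : ‖x‖ * ‖y‖ < 2 * ‖x‖ * ‖y‖ * Real.cos (angle x y) := by
    nlinarith [mul_pos hxpos hypos]
  have hsq : ‖x - y‖ ^ 2 < ‖x‖ ^ 2 := by
    rw [sq, sq]
    nlinarith [mul_nonneg (sub_nonneg.2 hyx) hypos.le]
  rw [hvw, hxd]
  exact lt_of_pow_lt_pow_left₀ 2 (norm_nonneg x) hsq

open InnerProductGeometry in
/-- The MST angle lemma: two tree edges at a vertex subtend angle at least π/3. -/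
lemma angle_ge {S : Finset Pt} {T : SimpleGraph {p : Pt // p ∈ S}}
    (hT : T.IsTree)
    (hmin : ∀ T' : SimpleGraph {p : Pt // p ∈ S}, T'.IsTree → totalLength T ≤ totalLength T')
    {u v w : {p : Pt // p ∈ S}} (hv : T.Adj u v) (hw : T.Adj u w) (hvw : v ≠ w) :
    π / 3 ≤ angle ((v : Pt) - u) ((w : Pt) - u) := by
  by_contra h
  push_neg at h
  have hvne : (v : Pt) ≠ (u : Pt) := fun hh => hv.ne' (Subtype.ext hh)
  have hwne : (w : Pt) ≠ (u : Pt) := fun hh => hw.ne' (Subtype.ext hh)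
  rcases le_total (dist (u : Pt) (w : Pt)) (dist (u : Pt) (v : Pt)) with hle | hle
  · exact exchange hT hmin hv hw hvw (dist_lt_of_angle_lt hvne hwne hle h)
  · refine exchange hT hmin hw hv hvw.symm ?_
    have := dist_lt_of_angle_lt hwne hvne hle (by rwa [angle_comm])
    simpa [dist_comm] using this

theorem stmt_11 (S : Finset Pt) (T : SimpleGraph {p : Pt // p ∈ S})
    (hT : T.IsTree)
    (hmin : ∀ T' : SimpleGraph {p : Pt // p ∈ S}, T'.IsTree → totalLength T ≤ totalLength T') :
    ∀ u : {p : Pt // p ∈ S}, (T.neighborSet u).ncard ≤ 6 := by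
  classical
  intro u
  by_contra hcard
  push_neg at hcard
  -- setup orientation
  haveI : Fact (Module.finrank ℝ Pt = 2) := ⟨finrank_euclideanSpace_fin⟩
  set o : Orientation ℝ Pt (Fin 2) := (EuclideanSpace.basisFun (Fin 2) ℝ).toBasis.orientation
    with ho
  set e : Pt := EuclideanSpace.single 0 1 with he
  have he0 : e ≠ 0 := by
    rw [he]
    intro h
    have := congrArg (fun p : Pt => p 0) h
    simp [EuclideanSpace.single] at this
  set N : Finset {p : Pt // p ∈ S} := (T.neighborSet u).toFinite.toFinset with hN
  have hNcard : 6 < N.card := by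
    rwa [hN, ← Set.ncard_eq_toFinset_card _ (T.neighborSet u).toFinite]
  have hNmem : ∀ n ∈ N, T.Adj u n := by
    intro n hn
    rw [hN, Set.Finite.mem_toFinset] at hn
    exact hn
  -- the angle coordinate
  set θ : {p : Pt // p ∈ S} → ℝ := fun n => (o.oangle e ((n : Pt) - u)).toReal with hθ
  have hθIoc : ∀ n, θ n ∈ Set.Ioc (-π) π := fun n => Real.Angle.toReal_mem_Ioc _
  -- bucket map
  set b : {p : Pt // p ∈ S} → ℤ := fun n => ⌈(θ n + π) * 3 / π⌉ with hb
  have hπ : (0:ℝ) < π := Real.pi_pos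
  have hbmem : ∀ n, b n ∈ Finset.Icc (1:ℤ) 6 := by
    intro n
    obtain ⟨h1, h2⟩ := hθIoc n
    rw [Finset.mem_Icc, hb]
    constructor
    · have hpos : (0:ℝ) < θ n + π := by linarith
      have : (0:ℝ) < (θ n + π) * 3 / π := by positivity
      exact Int.ceil_pos.2 this
    · apply Int.ceil_le.2
      push_cast
      rw [div_le_iff₀ hπ]
      nlinarith
  have hpigeon : ∃ v ∈ N, ∃ w ∈ N, v ≠ w ∧ b v = b w := by
    have hlt : (Finset.Icc (1:ℤ) 6).card < N.card := by
      simp only [Int.card_Icc]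
      norm_num
      omega
    obtain ⟨v, hv, w, hw, hne, heq⟩ :=
      Finset.exists_ne_map_eq_of_card_lt_of_maps_to hlt (fun n _ => hbmem n)
    exact ⟨v, hv, w, hw, hne, heq⟩
  obtain ⟨v, hvN, w, hwN, hne, hbeq⟩ := hpigeon
  have hv := hNmem v hvN
  have hw := hNmem w hwN
  -- |θ v - θ w| < π/3
  have hclose : |θ v - θ w| < π / 3 := by
    set a1 : ℝ := (θ v + π) * 3 / π with ha1
    set a2 : ℝ := (θ w + π) * 3 / π with ha2
    have h1 := Int.ceil_lt_add_one a1
    have h2 := Int.le_ceil a1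
    have h3 := Int.ceil_lt_add_one a2
    have h4 := Int.le_ceil a2
    rw [hb] at hbeq
    have hcast : ((⌈a1⌉ : ℤ) : ℝ) = ((⌈a2⌉ : ℤ) : ℝ) := by exact_mod_cast hbeq
    have e1 : a1 - a2 < 1 := by linarith
    have e2 : a2 - a1 < 1 := by linarith
    have hd : θ v - θ w = (a1 - a2) * π / 3 := by
      rw [ha1, ha2]
      field_simp
      ring
    rw [hd, abs_lt]
    constructor
    · nlinarith [mul_pos hπ (by linarith : (0:ℝ) < 1 - (a2 - a1))]
    · nlinarith [mul_pos hπ (by linarith : (0:ℝ) < 1 - (a1 - a2))]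
  -- relate to the unoriented angle
  have hx0 : ((v : Pt) - u) ≠ 0 := sub_ne_zero.2 (fun hh => hv.ne' (Subtype.ext hh))
  have hy0 : ((w : Pt) - u) ≠ 0 := sub_ne_zero.2 (fun hh => hw.ne' (Subtype.ext hh))
  have hoeq : o.oangle ((v : Pt) - u) ((w : Pt) - u) = ((θ w - θ v : ℝ) : Real.Angle) := by
    rw [← o.oangle_add hx0 he0 hy0, o.oangle_rev e, hθ]
    push_cast
    rw [Real.Angle.coe_sub]
    simp [Real.Angle.coe_toReal]
    abel
  have hangle : InnerProductGeometry.angle ((v : Pt) - u) ((w : Pt) - u) = |θ w - θ v| := by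
    have h3 : |θ w - θ v| < π / 3 := by rwa [abs_sub_comm] at hclose
    have h4 := abs_lt.1 h3
    rw [o.angle_eq_abs_oangle_toReal hx0 hy0, hoeq,
      Real.Angle.toReal_coe_eq_self_iff.2 ⟨by linarith, by linarith⟩]
  have hge := angle_ge hT hmin hv hw hne
  rw [hangle, abs_sub_comm] at hge
  linarith [hclose, hge, le_abs_self (θ v - θ w)]
end

section
/- If uv and uw are two distinct edges incident to a common vertex u in a Euclidean minimum spanning tree T of a finite point set S ⊆ ℝ², then ‖v − w‖ ≥ max(‖v − u‖, ‖w − u‖); equivalently, the angle at u between the segments uv and uw is at least π/3. -/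
open RealInnerProductSpace EuclideanGeometry

open SimpleGraph in
lemma exchange_aux {S : Finset Pt} (T : SimpleGraph {p : Pt // p ∈ S})
    (hT : T.IsTree)
    (hmin : ∀ T' : SimpleGraph {p : Pt // p ∈ S}, T'.IsTree → totalLength T ≤ totalLength T')
    (u v w : {p : Pt // p ∈ S}) (hvw : v ≠ w)
    (huv : T.Adj u v) (huw : T.Adj u w) :
    dist (u : Pt) (v : Pt) ≤ dist (v : Pt) (w : Pt) := by
  classical
  have huvne : u ≠ v := huv.ne
  have huwne : u ≠ w := huw.ne
  -- uv is a bridge of T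
  have hbr : ¬ (T \ fromEdgeSet {s(u, v)}).Reachable u v :=
    isBridge_iff.mp (isAcyclic_iff_forall_adj_isBridge.mp hT.IsAcyclic huv)
  set G1 : SimpleGraph {p : Pt // p ∈ S} := T.deleteEdges {s(u, v)} with hG1def
  have hG1eq : G1 = T \ fromEdgeSet {s(u, v)} := rfl
  have hG1le : G1 ≤ T := fun a b h => h.1
  have hG1uw : G1.Adj u w := by
    rw [hG1def, deleteEdges_adj]
    refine ⟨huw, ?_⟩
    rw [Set.mem_singleton_iff, Sym2.eq_iff]
    rintro (⟨-, rfl⟩ | ⟨rfl, -⟩)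
    · exact hvw rfl
    · exact huvne rfl
  -- v and w are not adjacent in T
  have hnadjvw : ¬ T.Adj v w := by
    intro h
    have hG1wv : G1.Adj w v := by
      rw [hG1def, deleteEdges_adj]
      refine ⟨h.symm, ?_⟩
      rw [Set.mem_singleton_iff, Sym2.eq_iff]
      rintro (⟨rfl, -⟩ | ⟨rfl, -⟩)
      · exact huwne rfl
      · exact hvw rfl
    rw [← hG1eq] at hbr
    exact hbr ⟨Walk.cons hG1uw (Walk.cons hG1wv Walk.nil)⟩
  set T' : SimpleGraph {p : Pt // p ∈ S} := G1 ⊔ fromEdgeSet {s(v, w)} with hT'def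
  have hT'vw : T'.Adj v w := by
    rw [hT'def, sup_adj, fromEdgeSet_adj]
    exact Or.inr ⟨rfl, hvw⟩
  have hT'uw : T'.Adj u w := by
    rw [hT'def, sup_adj]
    exact Or.inl hG1uw
  have hreach_uv : T'.Reachable u v :=
    ⟨Walk.cons hT'uw (Walk.cons hT'vw.symm Walk.nil)⟩
  -- T' is connected
  have key : ∀ x y : {p : Pt // p ∈ S}, T.Reachable x y → T'.Reachable x y := by
    intro x y hxy
    obtain ⟨p⟩ := hxy
    induction p with
    | nil => exact Reachable.refl _
    | @cons a b c h p ih =>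
      refine Reachable.trans ?_ ih
      by_cases he : s(a, b) = s(u, v)
      · rw [Sym2.eq_iff] at he
        rcases he with ⟨rfl, rfl⟩ | ⟨rfl, rfl⟩
        · exact hreach_uv
        · exact hreach_uv.symm
      · refine Adj.reachable (G := T') (?_ : T'.Adj a b)
        rw [hT'def, sup_adj, hG1def, deleteEdges_adj]
        exact Or.inl ⟨h, by simpa using he⟩
  haveI : Nonempty {p : Pt // p ∈ S} := hT.isConnected.nonempty
  have hconn : T'.Connected :=
    SimpleGraph.Connected.mk (fun x y => key x y (hT.isConnected.preconnected x y))
  -- T' is acyclic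
  have hacyc : T'.IsAcyclic := by
    intro x c hc
    by_cases he : s(v, w) ∈ c.edges
    · have hr : (T' \ fromEdgeSet {s(v, w)}).Reachable v w :=
        (adj_and_reachable_delete_edges_iff_exists_cycle.mpr ⟨x, c, hc, he⟩).2
      have hle : T' \ fromEdgeSet {s(v, w)} ≤ G1 := by
        intro a b hab
        rcases hab.1 with h | h
        · exact h
        · exact absurd h hab.2
      have hG1vw : G1.Reachable v w := hr.mono hle
      rw [← hG1eq] at hbr
      exact hbr ((hG1uw.reachable).trans hG1vw.symm)
    · have hsub : ∀ e ∈ c.edges, e ∈ T.edgeSet := by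
        intro e hce
        have h1 : e ∈ T'.edgeSet := c.edges_subset_edgeSet hce
        rw [hT'def, edgeSet_sup, edgeSet_fromEdgeSet] at h1
        rcases h1 with h1 | h1
        · exact (edgeSet_mono hG1le) h1
        · rw [Set.mem_diff, Set.mem_singleton_iff] at h1
          exact absurd (h1.1 ▸ hce) he
      exact hT.IsAcyclic (c.transfer T hsub) (hc.transfer hsub)
  have hT'tree : T'.IsTree := ⟨hconn, hacyc⟩
  -- edge sets
  have hmemuv : s(u, v) ∈ T.edgeSet := huv
  have hnmemvw : s(v, w) ∉ T.edgeSet := hnadjvw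
  have hE : T'.edgeSet = (T.edgeSet \ {s(u, v)}) ∪ {s(v, w)} := by
    rw [hT'def, edgeSet_sup, edgeSet_fromEdgeSet, hG1def, edgeSet_deleteEdges]
    congr 1
    ext e
    simp only [Set.mem_diff, Set.mem_singleton_iff, Set.mem_setOf_eq, and_iff_left_iff_imp]
    rintro rfl
    simpa using hvw
  -- total length computations
  have hfin : ∀ (s : Set (Sym2 {p : Pt // p ∈ S})), s.Finite := fun s => Set.toFinite s
  have hlen_uv : edgeLength s(u, v) = dist (u : Pt) (v : Pt) := rfl
  have hlen_vw : edgeLength s(v, w) = dist (v : Pt) (w : Pt) := rfl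
  have h1 : totalLength T' =
      (∑ᶠ e ∈ (T.edgeSet \ {s(u, v)}), edgeLength e) + dist (v : Pt) (w : Pt) := by
    rw [totalLength, hE, finsum_mem_union ?_ (hfin _) (hfin _), finsum_mem_singleton, hlen_vw]
    rw [Set.disjoint_singleton_right]
    exact fun h => hnmemvw h.1
  have h2 : totalLength T =
      (∑ᶠ e ∈ (T.edgeSet \ {s(u, v)}), edgeLength e) + dist (u : Pt) (v : Pt) := by
    conv_lhs => rw [totalLength,
      ← Set.diff_union_of_subset (Set.singleton_subset_iff.mpr hmemuv)]
    rw [finsum_mem_union ?_ (hfin _) (hfin _), finsum_mem_singleton, hlen_uv]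
    rw [Set.disjoint_singleton_right]
    exact fun h => h.2 rfl
  have := hmin T' hT'tree
  rw [h1, h2] at this
  linarith

theorem stmt_12 (S : Finset Pt) (T : SimpleGraph {p : Pt // p ∈ S})
    (hT : T.IsTree)
    (hmin : ∀ T' : SimpleGraph {p : Pt // p ∈ S}, T'.IsTree → totalLength T ≤ totalLength T')
    (u v w : {p : Pt // p ∈ S}) (hvw : v ≠ w)
    (huv : T.Adj u v) (huw : T.Adj u w) :
    max (dist (v : Pt) (u : Pt)) (dist (w : Pt) (u : Pt)) ≤ dist (v : Pt) (w : Pt) ∧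
      Real.pi / 3 ≤ ∠ (v : Pt) (u : Pt) (w : Pt) := by
  have h1 : dist (v : Pt) (u : Pt) ≤ dist (v : Pt) (w : Pt) := by
    have := exchange_aux T hT hmin u v w hvw huv huw
    rwa [dist_comm (u : Pt) (v : Pt)] at this
  have h2 : dist (w : Pt) (u : Pt) ≤ dist (v : Pt) (w : Pt) := by
    have := exchange_aux T hT hmin u w v hvw.symm huw huv
    rwa [dist_comm (u : Pt) (w : Pt), dist_comm (w : Pt) (v : Pt)] at this
  refine ⟨max_le h1 h2, ?_⟩
  have hvu : (v : Pt) ≠ (u : Pt) := Subtype.coe_injective.ne huv.ne'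
  have hwu : (w : Pt) ≠ (u : Pt) := Subtype.coe_injective.ne huw.ne'
  have ha : 0 < dist (v : Pt) (u : Pt) := dist_pos.mpr hvu
  have hb : 0 < dist (w : Pt) (u : Pt) := dist_pos.mpr hwu
  have hlaw := EuclideanGeometry.law_cos (v : Pt) (u : Pt) (w : Pt)
  have hcos : Real.cos (∠ (v : Pt) (u : Pt) (w : Pt)) ≤ 1 / 2 := by
    rcases le_total (dist (v : Pt) (u : Pt)) (dist (w : Pt) (u : Pt)) with hab | hab
    · nlinarith [mul_le_mul_of_nonneg_left h2 hb.le, mul_pos ha hb,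
        mul_le_mul_of_nonneg_left hab ha.le]
    · nlinarith [mul_le_mul_of_nonneg_left h1 ha.le, mul_pos ha hb,
        mul_le_mul_of_nonneg_left hab hb.le]
  by_contra hlt
  push_neg at hlt
  have h0 : 0 ≤ ∠ (v : Pt) (u : Pt) (w : Pt) := EuclideanGeometry.angle_nonneg _ _ _
  have hπ : ∠ (v : Pt) (u : Pt) (w : Pt) ≤ Real.pi := EuclideanGeometry.angle_le_pi _ _ _
  have hmem1 : ∠ (v : Pt) (u : Pt) (w : Pt) ∈ Set.Icc 0 Real.pi := ⟨h0, hπ⟩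
  have hmem2 : Real.pi / 3 ∈ Set.Icc 0 Real.pi :=
    ⟨by positivity, by linarith [Real.pi_pos]⟩
  have := Real.strictAntiOn_cos hmem1 hmem2 hlt
  rw [Real.cos_pi_div_three] at this
  linarith
end

section
/- For every even positive integer k, the sum 1 + ∑_{i=1}^{k−1} 2·sin(π·i/(2k)) equals cot(π/(4k)), and this quantity is strictly greater than k. -/
open Real

theorem stmt_13 (k : ℕ) (hk : 0 < k) (heven : Even k) :
    1 + ∑ i ∈ Finset.Ico 1 k, 2 * Real.sin (Real.pi * i / (2 * k)) =
        Real.cos (Real.pi / (4 * k)) / Real.sin (Real.pi / (4 * k)) ∧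
      (k : ℝ) < Real.cos (Real.pi / (4 * k)) / Real.sin (Real.pi / (4 * k)) := by
  have hk2 : 2 ≤ k := by rcases heven with ⟨m, hm⟩; omega
  have hkR : (0:ℝ) < k := by exact_mod_cast hk
  have hkR2 : (2:ℝ) ≤ k := by exact_mod_cast hk2
  set s : ℝ := Real.pi / (4 * k) with hs
  have hspos : 0 < s := by positivity
  have hslt : s ≤ Real.pi / 8 := by
    rw [hs, div_le_div_iff₀ (by positivity) (by norm_num)]
    nlinarith [Real.pi_pos]
  have hsltpi : s < Real.pi := lt_of_le_of_lt hslt (by nlinarith [Real.pi_pos])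
  have hsin : 0 < Real.sin s := Real.sin_pos_of_pos_of_lt_pi hspos hsltpi
  set g : ℕ → ℝ := fun j => Real.cos ((2 * (j:ℝ) + 1) * s) with hg
  have key : (1 + ∑ i ∈ Finset.Ico 1 k, 2 * Real.sin (Real.pi * i / (2 * k))) * Real.sin s
      = Real.cos s := by
    have hsum : (∑ i ∈ Finset.Ico 1 k, 2 * Real.sin (Real.pi * i / (2 * k))) * Real.sin s
        = ∑ j ∈ Finset.range (k - 1), (g j - g (j + 1)) := by
      rw [Finset.sum_mul, Finset.sum_Ico_eq_sum_range]
      apply Finset.sum_congr rfl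
      intro j _
      have h1 : Real.pi * (1 + (j:ℝ)) / (2 * k) = (2 * (j:ℝ) + 1 + 1) * s := by
        rw [hs]; field_simp; ring
      have e1 : ((2*(j:ℝ)+1)*s + (2*((j:ℝ)+1)+1)*s)/2 = (2*(j:ℝ)+1+1)*s := by ring
      have e2 : ((2*(j:ℝ)+1)*s - (2*((j:ℝ)+1)+1)*s)/2 = -s := by ring
      have : g j - g (j+1) = 2 * Real.sin (Real.pi * ((1 + j : ℕ) : ℝ) / (2 * k)) * Real.sin s := by
        simp only [hg]
        push_cast
        rw [Real.cos_sub_cos, e1, e2, Real.sin_neg, h1]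
        ring
      rw [this]
    have htel : ∑ j ∈ Finset.range (k - 1), (g j - g (j + 1)) = g 0 - g (k - 1) :=
      Finset.sum_range_sub' g (k - 1)
    have hg0 : g 0 = Real.cos s := by simp [hg]
    have hgk : g (k - 1) = Real.sin s := by
      have hc : ((k - 1 : ℕ) : ℝ) = (k:ℝ) - 1 := by
        have : (1:ℕ) ≤ k := hk
        push_cast [this]; ring
      have harg : (2 * ((k:ℝ) - 1) + 1) * s = Real.pi / 2 - s := by
        rw [hs]; field_simp; ring
      rw [hg]; simp only [hc]
      rw [harg, Real.cos_pi_div_two_sub]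
    rw [add_mul, one_mul, hsum, htel, hg0, hgk]
    ring
  have heq : 1 + ∑ i ∈ Finset.Ico 1 k, 2 * Real.sin (Real.pi * i / (2 * k))
      = Real.cos s / Real.sin s := by
    rw [eq_div_iff (ne_of_gt hsin)]; exact key
  refine ⟨heq, ?_⟩
  rw [lt_div_iff₀ hsin]
  have hsinlt : Real.sin s < s := Real.sin_lt hspos
  have hks : (k:ℝ) * s = Real.pi / 4 := by rw [hs]; field_simp
  have hcos : Real.cos (Real.pi / 8) ≤ Real.cos s :=
    Real.cos_le_cos_of_nonneg_of_le_pi (le_of_lt hspos)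
      (by nlinarith [Real.pi_pos]) hslt
  have h14 : (1.4:ℝ) < Real.sqrt 2 := by
    nlinarith [Real.sq_sqrt (show (0:ℝ) ≤ 2 by norm_num), Real.sqrt_nonneg 2]
  have h2nn : (0:ℝ) ≤ 2 + Real.sqrt 2 := by positivity
  have h18 : (1.8:ℝ) < Real.sqrt (2 + Real.sqrt 2) := by
    nlinarith [Real.sq_sqrt h2nn, Real.sqrt_nonneg (2 + Real.sqrt 2)]
  have hc8 : (0.9:ℝ) < Real.cos (Real.pi / 8) := by
    rw [Real.cos_pi_div_eight]; nlinarith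
  have hksin : (k:ℝ) * Real.sin s < Real.pi / 4 := by
    calc (k:ℝ) * Real.sin s < (k:ℝ) * s := by
          exact mul_lt_mul_of_pos_left hsinlt hkR
      _ = Real.pi / 4 := hks
  have : Real.pi / 4 < 0.9 := by nlinarith [Real.pi_lt_d2]
  linarith
end
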